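/- arXiv:2402.06502 — 3 statements merged into one kernel-verified Lean document; each statement's English description precedes it below -/
import Mathlib

section
/- Let P̃(x, ξ) denote the Poincaré map of the modified hybrid system with phase vector fields f̃_i(x) = f_i(x) + ξ·∇H_i(x), where each H_i is a C¹ first integral of f_i (dH_i·f_i ≡ 0), resets preserve H (H_{i+1}(Δ_i(x)) = H_i(x) on guards), ∇H_i is nonvanishing along the trajectory, and all phase durations t_i are strictly positive. If (x₀, ξ) is a fixed point of P̃ (i.e., the modified hybrid trajectory from x₀ returns to x₀), then ξ = 0. -/
open Set

lemma fderiv_apply_gradient_self {N : ℕ} (H : EuclideanSpace ℝ (Fin N) → ℝ)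
    (y : EuclideanSpace ℝ (Fin N)) :
    fderiv ℝ H y (gradient H y) = ‖gradient H y‖ ^ 2 := by
  have : fderiv ℝ H y (gradient H y) = inner ℝ (gradient H y) (gradient H y) := by
    rw [gradient, InnerProductSpace.toDual_symm_apply]
  rw [this, real_inner_self_eq_norm_sq]

/-- Dissipative embedding of a conservative hybrid system: if the modified hybrid
trajectory with phase fields `f̃ᵢ = fᵢ + ξ∇Hᵢ` (where each `Hᵢ` is a first
integral of `fᵢ`, resets preserve `H`, gradients are nonvanishing along the
trajectory and all phase durations are positive) is periodic, then `ξ = 0`. -/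
theorem stmt11 {N m : ℕ} [NeZero m]
    (f : Fin m → EuclideanSpace ℝ (Fin N) → EuclideanSpace ℝ (Fin N))
    (H : Fin m → EuclideanSpace ℝ (Fin N) → ℝ)
    (Δ : Fin m → EuclideanSpace ℝ (Fin N) → EuclideanSpace ℝ (Fin N))
    (ξ : ℝ) (t : Fin m → ℝ)
    (x : Fin m → ℝ → EuclideanSpace ℝ (Fin N))
    (hH : ∀ i, ContDiff ℝ 1 (H i))
    (hfirst : ∀ i y, fderiv ℝ (H i) y (f i y) = 0)
    (hreset : ∀ i y, H (i + 1) (Δ i y) = H i y)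
    (htpos : ∀ i, 0 < t i)
    (hode : ∀ i, ∀ s ∈ Icc (0:ℝ) (t i),
      HasDerivAt (x i) (f i (x i s) + ξ • gradient (H i) (x i s)) s)
    (hjump : ∀ i : Fin m, x (i + 1) 0 = Δ i (x i (t i)))
    (hgrad : ∀ i, ∀ s ∈ Icc (0:ℝ) (t i), gradient (H i) (x i s) ≠ 0) :
    ξ = 0 := by
  by_contra hξ
  set φ : Fin m → ℝ → ℝ := fun i s => H i (x i s) with hφ
  -- derivative of the energy along each phase
  have hderiv : ∀ i, ∀ s ∈ Icc (0:ℝ) (t i),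
      HasDerivAt (φ i) (ξ * ‖gradient (H i) (x i s)‖ ^ 2) s := by
    intro i s hs
    have hF := ((hH i).differentiable one_ne_zero (x i s)).hasFDerivAt
    have hc := hF.comp_hasDerivAt s (hode i s hs)
    have : (fderiv ℝ (H i) (x i s)) (f i (x i s) + ξ • gradient (H i) (x i s))
        = ξ * ‖gradient (H i) (x i s)‖ ^ 2 := by
      rw [map_add, (fderiv ℝ (H i) (x i s)).map_smul, hfirst,
        fderiv_apply_gradient_self]
      simp
    rwa [this] at hc
  -- ξ • φ i is strictly monotone on the phase interval
  have hsign : ∀ i, 0 < ξ * (φ i (t i) - φ i 0) := by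
    intro i
    set ψ : ℝ → ℝ := fun s => ξ * φ i s with hψ
    have hψd : ∀ s ∈ Icc (0:ℝ) (t i),
        HasDerivAt ψ (ξ * (ξ * ‖gradient (H i) (x i s)‖ ^ 2)) s :=
      fun s hs => (hderiv i s hs).const_mul ξ
    have hmono : StrictMonoOn ψ (Icc (0:ℝ) (t i)) := by
      apply strictMonoOn_of_deriv_pos (convex_Icc _ _)
      · exact fun s hs => (hψd s hs).continuousAt.continuousWithinAt
      · intro s hs
        rw [interior_Icc] at hs
        have hs' : s ∈ Icc (0:ℝ) (t i) := Ioo_subset_Icc_self hs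
        rw [(hψd s hs').deriv]
        have h1 : (0:ℝ) < ξ * ξ := mul_self_pos.mpr hξ
        have h2 : (0:ℝ) < ‖gradient (H i) (x i s)‖ ^ 2 := by
          exact pow_pos (norm_pos_iff.mpr (hgrad i s hs')) 2
        calc (0:ℝ) < (ξ * ξ) * ‖gradient (H i) (x i s)‖ ^ 2 := mul_pos h1 h2
          _ = ξ * (ξ * ‖gradient (H i) (x i s)‖ ^ 2) := by ring
    have := hmono (left_mem_Icc.mpr (htpos i).le) (right_mem_Icc.mpr (htpos i).le) (htpos i)
    rw [mul_sub]
    exact sub_pos.mpr this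
  -- the total change of energy over a period vanishes
  have hlink : ∀ i : Fin m, φ (i + 1) 0 = φ i (t i) := by
    intro i
    simp only [hφ]
    rw [hjump, hreset]
  have hsum : ∑ i, (φ i (t i) - φ i 0) = 0 := by
    rw [Finset.sum_sub_distrib, sub_eq_zero]
    calc ∑ i, φ i (t i) = ∑ i, φ (i + 1) 0 := by
          exact Finset.sum_congr rfl fun i _ => (hlink i).symm
      _ = ∑ i, φ i 0 := Fintype.sum_equiv (Equiv.addRight 1) _ _ (fun i => rfl)
  have hpos : 0 < ∑ i, ξ * (φ i (t i) - φ i 0) :=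
    Finset.sum_pos (fun i _ => hsign i) Finset.univ_nonempty
  rw [← Finset.mul_sum, hsum, mul_zero] at hpos
  exact lt_irrefl _ hpos
end

section
/- Bouncing rod energy conservation at impact: let c = cos α and r, l > 0. The left-corner impact map Δ on ℝ⁴, fixing (y, α) and updating (ẏ, α̇) ↦ (ẏ, α̇) − (4/(l²c² + 4r²))·(2r²ẏ − l r² c α̇, (1/2)l²c²α̇ − l c ẏ), preserves the kinetic-plus-potential energy H(y, α, ẏ, α̇) = (1/2)m(ẏ² + r²α̇²) + m g y for any m, g > 0; that is, H(Δ(x)) = H(x) for all x = (y, α, ẏ, α̇) ∈ ℝ⁴ with l²cos²α + 4r² ≠ 0. -/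
/-! The impact map sends `(ẏ, α̇)` to its reflection in the line `l c α̇ = 2 ẏ`, taken orthogonally
for the kinetic-energy form `ẏ² + r² α̇²`, so it preserves that form; positions, and hence the
potential energy, are unchanged. -/

theorem impact_kineticEnergy_eq (l r c v w : ℝ) (hd : l ^ 2 * c ^ 2 + 4 * r ^ 2 ≠ 0) :
    (v - 4 * (2 * r ^ 2 * v - l * r ^ 2 * c * w) / (l ^ 2 * c ^ 2 + 4 * r ^ 2)) ^ 2
        + r ^ 2 * (w - 4 * ((1 / 2) * l ^ 2 * c ^ 2 * w - l * c * v)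
          / (l ^ 2 * c ^ 2 + 4 * r ^ 2)) ^ 2
      = v ^ 2 + r ^ 2 * w ^ 2 := by
  field_simp
  ring

theorem stmt14_general (m g r l : ℝ)
    (y α dy da : ℝ) (hden : l ^ 2 * Real.cos α ^ 2 + 4 * r ^ 2 ≠ 0) :
    let c := Real.cos α
    let d := l ^ 2 * c ^ 2 + 4 * r ^ 2
    let dy' := dy - 4 * (2 * r ^ 2 * dy - l * r ^ 2 * c * da) / d
    let da' := da - 4 * ((1 / 2) * l ^ 2 * c ^ 2 * da - l * c * dy) / d
    (1 / 2) * m * (dy' ^ 2 + r ^ 2 * da' ^ 2) + m * g * y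
      = (1 / 2) * m * (dy ^ 2 + r ^ 2 * da ^ 2) + m * g * y := by
  intro c d dy' da'
  rw [impact_kineticEnergy_eq l r c dy da hden]

/-- Bouncing-rod energy conservation at impact: the left-corner elastic impact
map preserves the total energy `H = (1/2)m(ẏ² + r²α̇²) + mgy`. -/
theorem stmt14 (m g r l : ℝ) (hm : 0 < m) (hg : 0 < g) (hr : 0 < r) (hl : 0 < l)
    (y α dy da : ℝ) (hden : l ^ 2 * Real.cos α ^ 2 + 4 * r ^ 2 ≠ 0) :
    let c := Real.cos α
    let d := l ^ 2 * c ^ 2 + 4 * r ^ 2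
    let dy' := dy - 4 * (2 * r ^ 2 * dy - l * r ^ 2 * c * da) / d
    let da' := da - 4 * ((1 / 2) * l ^ 2 * c ^ 2 * da - l * c * dy) / d
    (1 / 2) * m * (dy' ^ 2 + r ^ 2 * da' ^ 2) + m * g * y
      = (1 / 2) * m * (dy ^ 2 + r ^ 2 * da ^ 2) + m * g * y :=
  stmt14_general m g r l y α dy da hden
end

section
/- Poincaré map Jacobian structure: under the assumptions of the previous item, define P(x) = φ(τ(x), x) for x near x₀. Then P is C¹ and its Jacobian at x₀ is dP(x₀) = (I − (f(P(x₀)) ⊗ da)/(da · f(P(x₀)))) · Φ(t*, x₀), where da is evaluated at P(x₀), ⊗ denotes outer product of column and row vectors, and Φ(t*, x₀) is the fundamental matrix. Consequently da(P(x₀)) · dP(x₀) = 0, i.e., the image of dP(x₀) is tangent to the section {a = 0}. -/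
open Filter Topology

/-- Poincaré map Jacobian structure: with crossing time `τ`, the section map
`P(x) = φ(τ(x),x)` is C¹ at `x₀` with
`dP(x₀) = (I − (f(P(x₀)) ⊗ da)/(da·f(P(x₀)))) ∘ Φ(t*,x₀)`, and consequently
`da(P(x₀)) ∘ dP(x₀) = 0`. -/
theorem stmt16 {E : Type*} [NormedAddCommGroup E] [NormedSpace ℝ E]
    (f : E → E) (φ : ℝ → E → E) (x₀ : E) (tstar : ℝ)
    (hφ : ContDiff ℝ 1 (fun p : ℝ × E => φ p.1 p.2))
    (hflow : ∀ t x, HasDerivAt (fun s => φ s x) (f (φ t x)) t)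
    (a : E → ℝ) (ha : ContDiff ℝ 1 a)
    (τ : E → ℝ) (hτ : ContDiffAt ℝ 1 τ x₀) (hτ0 : τ x₀ = tstar)
    (hsec : ∀ᶠ x in 𝓝 x₀, a (φ (τ x) x) = 0)
    (htrans : fderiv ℝ a (φ tstar x₀) (f (φ tstar x₀)) ≠ 0) :
    let P : E → E := fun x => φ (τ x) x
    ContDiffAt ℝ 1 P x₀ ∧
    fderiv ℝ P x₀ =
      ((ContinuousLinearMap.id ℝ E) -
        (fderiv ℝ a (P x₀) (f (P x₀)))⁻¹ •
          (fderiv ℝ a (P x₀)).smulRight (f (P x₀))).comp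
        (fderiv ℝ (φ tstar) x₀) ∧
    (fderiv ℝ a (P x₀)).comp (fderiv ℝ P x₀) = 0 := by
  intro P
  have hFd : Differentiable ℝ (fun p : ℝ × E => φ p.1 p.2) := hφ.differentiable one_ne_zero
  have hτd : DifferentiableAt ℝ τ x₀ := hτ.differentiableAt one_ne_zero
  have hPx₀ : P x₀ = φ tstar x₀ := by simp [P, hτ0]
  -- smoothness of P
  have hPc : ContDiffAt ℝ 1 P x₀ := by
    have : ContDiffAt ℝ 1 (fun x : E => (τ x, x)) x₀ := hτ.prodMk contDiffAt_id
    have := (hφ.contDiffAt).comp x₀ this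
    exact this
  -- derivative of P via chain rule
  set DF := fderiv ℝ (fun p : ℝ × E => φ p.1 p.2) (tstar, x₀) with hDF
  have hg : HasFDerivAt (fun x : E => (τ x, x))
      ((fderiv ℝ τ x₀).prod (ContinuousLinearMap.id ℝ E)) x₀ :=
    hτd.hasFDerivAt.prodMk (hasFDerivAt_id x₀)
  have hFP : HasFDerivAt (fun p : ℝ × E => φ p.1 p.2) DF (τ x₀, x₀) := by
    rw [hτ0]; exact (hFd (tstar, x₀)).hasFDerivAt
  have hPd : HasFDerivAt P
      (DF.comp ((fderiv ℝ τ x₀).prod (ContinuousLinearMap.id ℝ E))) x₀ := by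
    exact HasFDerivAt.comp (f := fun x : E => (τ x, x)) x₀ hFP hg
  have hPfd : fderiv ℝ P x₀ = DF.comp ((fderiv ℝ τ x₀).prod (ContinuousLinearMap.id ℝ E)) :=
    hPd.fderiv
  -- partial derivative in time
  have h1 : DF (1, 0) = f (φ tstar x₀) := by
    have ht : HasFDerivAt (fun s : ℝ => (s, x₀))
        ((ContinuousLinearMap.id ℝ ℝ).prod 0) tstar :=
      (hasFDerivAt_id tstar).prodMk (hasFDerivAt_const x₀ tstar)
    have h1a := (((hFd (tstar, x₀)).hasFDerivAt.comp tstar ht).hasDerivAt)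
    have h1b : HasDerivAt (fun s => φ s x₀) (DF (1, 0)) tstar := by
      simpa [DF, Function.comp_def] using h1a
    exact h1b.unique (hflow tstar x₀)
  -- partial derivative in space
  have h2 : HasFDerivAt (φ tstar)
      (DF.comp ((0 : E →L[ℝ] ℝ).prod (ContinuousLinearMap.id ℝ E))) x₀ := by
    have hx : HasFDerivAt (fun x : E => ((tstar : ℝ), x))
        ((0 : E →L[ℝ] ℝ).prod (ContinuousLinearMap.id ℝ E)) x₀ :=
      (hasFDerivAt_const tstar x₀).prodMk (hasFDerivAt_id x₀)
    exact (hFd (tstar, x₀)).hasFDerivAt.comp x₀ hx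
  have hΦ : fderiv ℝ (φ tstar) x₀ =
      DF.comp ((0 : E →L[ℝ] ℝ).prod (ContinuousLinearMap.id ℝ E)) := h2.fderiv
  have hΦv : ∀ v : E, fderiv ℝ (φ tstar) x₀ v = DF (0, v) := by
    intro v; rw [hΦ]; rfl
  have hPv : ∀ v : E, fderiv ℝ P x₀ v
      = (fderiv ℝ τ x₀ v) • f (φ tstar x₀) + fderiv ℝ (φ tstar) x₀ v := by
    intro v
    rw [hPfd, hΦv]
    have : ((fderiv ℝ τ x₀).prod (ContinuousLinearMap.id ℝ E)) v
        = ((fderiv ℝ τ x₀ v) • ((1 : ℝ), (0 : E)) + (0, v)) := by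
      simp [ContinuousLinearMap.prod_apply]
    calc DF.comp ((fderiv ℝ τ x₀).prod (ContinuousLinearMap.id ℝ E)) v
        = DF ((fderiv ℝ τ x₀ v) • ((1 : ℝ), (0 : E)) + (0, v)) := by
          rw [ContinuousLinearMap.comp_apply, this]
      _ = (fderiv ℝ τ x₀ v) • DF (1, 0) + DF (0, v) := by
          rw [map_add, map_smul]
      _ = _ := by rw [h1]
  -- da ∘ dP = 0
  have hker : (fderiv ℝ a (P x₀)).comp (fderiv ℝ P x₀) = 0 := by
    have haP : (fun x => a (P x)) =ᶠ[𝓝 x₀] fun _ => (0 : ℝ) := hsec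
    have h0 : fderiv ℝ (fun x => a (P x)) x₀ = 0 := by
      rw [haP.fderiv_eq, fderiv_fun_const]; rfl
    have hcomp : fderiv ℝ (fun x => a (P x)) x₀
        = (fderiv ℝ a (P x₀)).comp (fderiv ℝ P x₀) :=
      fderiv_comp x₀ ((ha.differentiable one_ne_zero) (P x₀)) hPd.differentiableAt
    rw [← hcomp, h0]
  refine ⟨hPc, ?_, hker⟩
  -- solve for dτ and verify the formula
  set c := fderiv ℝ a (P x₀) (f (P x₀)) with hc
  have hcne : c ≠ 0 := by rw [hc, hPx₀]; exact htrans
  have hτv : ∀ v : E, fderiv ℝ τ x₀ v = -(fderiv ℝ a (P x₀) (fderiv ℝ (φ tstar) x₀ v)) / c := by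
    intro v
    have := congrArg (fun L : E →L[ℝ] ℝ => L v) hker
    simp only [ContinuousLinearMap.comp_apply, ContinuousLinearMap.zero_apply] at this
    rw [hPv v, map_add, map_smul] at this
    have hcf : fderiv ℝ a (P x₀) (f (φ tstar x₀)) = c := by rw [hc, hPx₀]
    rw [hcf, smul_eq_mul] at this
    field_simp
    linarith [this]
  ext v
  rw [hPv v, ContinuousLinearMap.comp_apply, ContinuousLinearMap.sub_apply,
    ContinuousLinearMap.smul_apply, ContinuousLinearMap.smulRight_apply,
    ContinuousLinearMap.id_apply, hτv v, hPx₀]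
  rw [smul_smul]
  module
end
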